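/- arXiv:1303.4785 — 6 statements merged into one kernel-verified Lean document; each statement's English description precedes it below -/
import Mathlib

section
/- For all u, v in the s-ball V_s, the gamma factor satisfies the Möbius gamma identity γ_{u ⊕_M v} = γ_u · γ_v · √(1 + (2/s²)·⟨u,v⟩ + (1/s⁴)·‖u‖²·‖v‖²); in particular ‖u ⊕_M v‖ < s, so that Möbius addition is a binary operation on the ball V_s. -/
open scoped RealInnerProductSpace

noncomputable def gamma {V : Type*} [NormedAddCommGroup V] [InnerProductSpace ℝ V]
    (c : ℝ) (u : V) : ℝ :=
  1 / Real.sqrt (1 - ‖u‖ ^ 2 / c ^ 2)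

noncomputable def eAdd {V : Type*} [NormedAddCommGroup V] [InnerProductSpace ℝ V]
    (c : ℝ) (u v : V) : V :=
  (1 / (1 + ⟪u, v⟫ / c ^ 2)) •
    (u + (1 / gamma c u) • v +
      ((1 / c ^ 2) * (gamma c u / (1 + gamma c u)) * ⟪u, v⟫) • u)

noncomputable def eGyr {V : Type*} [NormedAddCommGroup V] [InnerProductSpace ℝ V]
    (c : ℝ) (u v w : V) : V :=
  eAdd c (-(eAdd c u v)) (eAdd c u (eAdd c v w))

noncomputable def eCoadd {V : Type*} [NormedAddCommGroup V] [InnerProductSpace ℝ V]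
    (c : ℝ) (u v : V) : V :=
  eAdd c u (eGyr c u (-v) v)

noncomputable def mAdd {V : Type*} [NormedAddCommGroup V] [InnerProductSpace ℝ V]
    (s : ℝ) (u v : V) : V :=
  (1 / (1 + (2 / s ^ 2) * ⟪u, v⟫ + (1 / s ^ 4) * ‖u‖ ^ 2 * ‖v‖ ^ 2)) •
    ((1 + (2 / s ^ 2) * ⟪u, v⟫ + (1 / s ^ 2) * ‖v‖ ^ 2) • u +
      (1 - (1 / s ^ 2) * ‖u‖ ^ 2) • v)

noncomputable def mGyr {V : Type*} [NormedAddCommGroup V] [InnerProductSpace ℝ V]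
    (s : ℝ) (u v w : V) : V :=
  mAdd s (-(mAdd s u v)) (mAdd s u (mAdd s v w))

noncomputable def mCoadd {V : Type*} [NormedAddCommGroup V] [InnerProductSpace ℝ V]
    (s : ℝ) (u v : V) : V :=
  mAdd s u (mGyr s u (-v) v)

noncomputable def artanh (x : ℝ) : ℝ :=
  (1 / 2) * Real.log ((1 + x) / (1 - x))

open Classical in
noncomputable def sMul {V : Type*} [NormedAddCommGroup V] [InnerProductSpace ℝ V]
    (c : ℝ) (r : ℝ) (v : V) : V :=
  if v = 0 then 0 else (c * Real.tanh (r * artanh (‖v‖ / c)) / ‖v‖) • v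

variable {V : Type*} [NormedAddCommGroup V] [InnerProductSpace ℝ V]

/-! The Möbius sum `u ⊕ v = (A • u + B • v) / D` satisfies the Lorentz-factor identity
`1 - ‖u ⊕ v‖² / s² = (1 - ‖u‖² / s²) (1 - ‖v‖² / s²) / D`, a polynomial identity in `‖u‖`, `‖v‖`
and `⟪u, v⟫` once `‖A • u + B • v‖²` is expanded. On the ball both factors and `D` are positive,
which gives `‖u ⊕ v‖ < s`; taking reciprocal square roots gives the gamma identity. -/

lemma norm_smul_add_smul_sq (a b : ℝ) (u v : V) :
    ‖a • u + b • v‖ ^ 2 = a ^ 2 * ‖u‖ ^ 2 + 2 * (a * b) * ⟪u, v⟫ + b ^ 2 * ‖v‖ ^ 2 := by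
  rw [norm_add_sq_real, norm_smul, norm_smul, real_inner_smul_left, real_inner_smul_right,
    Real.norm_eq_abs, Real.norm_eq_abs, mul_pow, mul_pow, sq_abs, sq_abs]
  ring

lemma one_sub_norm_sq_div_sq_pos_iff {E : Type*} [SeminormedAddCommGroup E] {s : ℝ} (hs : 0 < s)
    (x : E) : 0 < 1 - ‖x‖ ^ 2 / s ^ 2 ↔ ‖x‖ < s := by
  rw [sub_pos, div_lt_one (by positivity), sq_lt_sq₀ (norm_nonneg x) hs.le]

lemma mAdd_denom_eq {s : ℝ} (hs : s ≠ 0) (u v : V) :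
    1 + (2 / s ^ 2) * ⟪u, v⟫ + (1 / s ^ 4) * ‖u‖ ^ 2 * ‖v‖ ^ 2 =
      (s ^ 4 + 2 * s ^ 2 * ⟪u, v⟫ + ‖u‖ ^ 2 * ‖v‖ ^ 2) / s ^ 4 := by
  field_simp

lemma mAdd_denom_pos {s : ℝ} {u v : V} (hs : s ≠ 0) (huv : ‖u‖ * ‖v‖ ≠ s ^ 2) :
    0 < 1 + (2 / s ^ 2) * ⟪u, v⟫ + (1 / s ^ 4) * ‖u‖ ^ 2 * ‖v‖ ^ 2 := by
  rw [mAdd_denom_eq hs]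
  have hinner : -(‖u‖ * ‖v‖) ≤ ⟪u, v⟫ := neg_le_of_abs_le (abs_real_inner_le_norm u v)
  have hsq : 0 < (s ^ 2 - ‖u‖ * ‖v‖) ^ 2 := sq_pos_iff.2 (sub_ne_zero.2 huv.symm)
  -- the numerator exceeds `(s² - ‖u‖‖v‖)²` by `2 s² (⟪u, v⟫ + ‖u‖‖v‖) ≥ 0`
  have : 0 < s ^ 4 + 2 * s ^ 2 * ⟪u, v⟫ + ‖u‖ ^ 2 * ‖v‖ ^ 2 := by
    nlinarith [mul_le_mul_of_nonneg_left hinner (sq_nonneg s)]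
  positivity

lemma one_sub_norm_mAdd_sq_div_sq {s : ℝ} {u v : V} (hs : s ≠ 0)
    (hD : 1 + (2 / s ^ 2) * ⟪u, v⟫ + (1 / s ^ 4) * ‖u‖ ^ 2 * ‖v‖ ^ 2 ≠ 0) :
    1 - ‖mAdd s u v‖ ^ 2 / s ^ 2 =
      (1 - ‖u‖ ^ 2 / s ^ 2) * (1 - ‖v‖ ^ 2 / s ^ 2) /
        (1 + (2 / s ^ 2) * ⟪u, v⟫ + (1 / s ^ 4) * ‖u‖ ^ 2 * ‖v‖ ^ 2) := by
  -- `D ≠ 0` in the shape `field_simp` reduces the denominators to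
  have hD' : s ^ 2 * (s ^ 2 + 2 * ⟪u, v⟫) + ‖v‖ ^ 2 * ‖u‖ ^ 2 ≠ 0 := by
    contrapose! hD
    rw [mAdd_denom_eq hs, div_eq_zero_iff]
    exact Or.inl (by linear_combination hD)
  rw [mAdd, norm_smul, mul_pow, norm_smul_add_smul_sq, Real.norm_eq_abs, sq_abs, div_pow,
    one_pow, one_div_mul_eq_div, mAdd_denom_eq hs]
  field_simp
  ring

theorem mobius_gamma_identity_general (s : ℝ) (u v : V)
    (hu : ‖u‖ < s) (hv : ‖v‖ < s) :
    gamma s (mAdd s u v) =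
      gamma s u * gamma s v *
        Real.sqrt (1 + (2 / s ^ 2) * ⟪u, v⟫ + (1 / s ^ 4) * ‖u‖ ^ 2 * ‖v‖ ^ 2) ∧
    ‖mAdd s u v‖ < s := by
  have hs : 0 < s := (norm_nonneg u).trans_lt hu
  have hu' := (one_sub_norm_sq_div_sq_pos_iff hs u).2 hu
  have hv' := (one_sub_norm_sq_div_sq_pos_iff hs v).2 hv
  have huv : ‖u‖ * ‖v‖ < s ^ 2 := by
    rw [sq]; exact mul_lt_mul'' hu hv (norm_nonneg u) (norm_nonneg v)
  have hD := mAdd_denom_pos hs.ne' huv.ne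
  have key := one_sub_norm_mAdd_sq_div_sq hs.ne' hD.ne'
  refine ⟨?_, (one_sub_norm_sq_div_sq_pos_iff hs _).1 (key ▸ by positivity)⟩
  rw [gamma, gamma, gamma, key, Real.sqrt_div' _ hD.le, Real.sqrt_mul hu'.le]
  field_simp

theorem mobius_gamma_identity (s : ℝ) (hs : 0 < s) (u v : V)
    (hu : ‖u‖ < s) (hv : ‖v‖ < s) :
    gamma s (mAdd s u v) =
      gamma s u * gamma s v *
        Real.sqrt (1 + (2 / s ^ 2) * ⟪u, v⟫ + (1 / s ^ 4) * ‖u‖ ^ 2 * ‖v‖ ^ 2) ∧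
    ‖mAdd s u v‖ < s :=
  mobius_gamma_identity_general s u v hu hv
end

section
/- Einstein addition is gyrocommutative: for all u, v in the c-ball V_c, u ⊕ v = gyr[u,v](v ⊕ u). -/
open scoped RealInnerProductSpace

variable {V : Type*} [NormedAddCommGroup V] [InnerProductSpace ℝ V]

/-!
Left cancellation `⊖a ⊕ (a ⊕ b) = b` reduces gyrocommutativity to the identity
`u ⊕ (v ⊕ (v ⊕ u)) = (u ⊕ v) ⊕ (u ⊕ v)`. The right side is a multiple of `u ⊕ v` by the
doubling formula `a ⊕ a = (2γ_a² / (2γ_a² - 1)) a`. For the left side, `a ⊕ (a ⊕ b)` has the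
closed form `(b + 2γ_a²D a) / (2γ_a²D - 1)` with `D = 1 + ⟨a, b⟩/c²`; adding `u` to it gives the
same multiple of `u ⊕ v`, because `γ_{u ⊕ v} = γ_u γ_v (1 + ⟨u, v⟩/c²)`.
-/

lemma one_sub_sq_norm_div_sq_pos {E : Type*} [SeminormedAddCommGroup E] {c : ℝ} (hc : 0 < c)
    {a : E} (ha : ‖a‖ < c) :
    0 < 1 - ‖a‖ ^ 2 / c ^ 2 := by
  rw [sub_pos, div_lt_one (by positivity)]
  exact pow_lt_pow_left₀ ha (norm_nonneg a) two_ne_zero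

lemma gamma_sq {c : ℝ} (hc : 0 < c) {a : V} (ha : ‖a‖ < c) :
    gamma c a ^ 2 = 1 / (1 - ‖a‖ ^ 2 / c ^ 2) := by
  rw [gamma, div_pow, one_pow, Real.sq_sqrt (one_sub_sq_norm_div_sq_pos hc ha).le]

lemma gamma_pos {c : ℝ} (hc : 0 < c) {a : V} (ha : ‖a‖ < c) : 0 < gamma c a := by
  have := one_sub_sq_norm_div_sq_pos hc ha
  unfold gamma
  positivity

lemma one_le_gamma {c : ℝ} (hc : 0 < c) {a : V} (ha : ‖a‖ < c) : 1 ≤ gamma c a := by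
  have hpos := one_sub_sq_norm_div_sq_pos hc ha
  refine one_le_one_div (Real.sqrt_pos.2 hpos) (Real.sqrt_le_one.2 ?_)
  have : 0 ≤ ‖a‖ ^ 2 / c ^ 2 := by positivity
  linarith

lemma sq_norm_eq_of_norm_lt {c : ℝ} (hc : 0 < c) {a : V} (ha : ‖a‖ < c) :
    ‖a‖ ^ 2 = c ^ 2 * (1 - 1 / gamma c a ^ 2) := by
  rw [gamma_sq hc ha, one_div_one_div]
  field_simp
  ring

@[simp]
lemma gamma_neg (c : ℝ) (a : V) : gamma c (-a) = gamma c a := by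
  simp [gamma]

lemma sq_add_inner_pos {c : ℝ} {a b : V} (ha : ‖a‖ < c) (hb : ‖b‖ < c) :
    0 < c ^ 2 + ⟪a, b⟫ := by
  have hab : -⟪a, b⟫ < c ^ 2 := calc
    -⟪a, b⟫ ≤ ‖a‖ * ‖b‖ := by linarith [(abs_le.1 (abs_real_inner_le_norm a b)).1]
    _ < c * c := mul_lt_mul'' ha hb (norm_nonneg a) (norm_nonneg b)
    _ = c ^ 2 := (sq c).symm
  linarith

lemma one_add_inner_div_sq_pos {c : ℝ} (hc : 0 < c) {a b : V} (ha : ‖a‖ < c) (hb : ‖b‖ < c) :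
    0 < 1 + ⟪a, b⟫ / c ^ 2 := by
  rw [one_add_div (by positivity)]
  exact div_pos (sq_add_inner_pos ha hb) (by positivity)

lemma one_sub_sq_norm_eAdd_div_sq {c : ℝ} (hc : 0 < c) {a b : V} (ha : ‖a‖ < c) (hb : ‖b‖ < c) :
    1 - ‖eAdd c a b‖ ^ 2 / c ^ 2 =
      1 / (gamma c a * gamma c b * (1 + ⟪a, b⟫ / c ^ 2)) ^ 2 := by
  have hγa := gamma_pos hc ha
  have hγb := gamma_pos hc hb
  have hD := sq_add_inner_pos ha hb
  rw [← real_inner_self_eq_norm_sq (eAdd c a b)]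
  simp only [eAdd, inner_add_left, inner_add_right, real_inner_smul_left, real_inner_smul_right,
    real_inner_self_eq_norm_sq a, real_inner_self_eq_norm_sq b, real_inner_comm a b,
    sq_norm_eq_of_norm_lt hc ha, sq_norm_eq_of_norm_lt hc hb]
  field_simp
  ring

lemma gamma_eAdd {c : ℝ} (hc : 0 < c) {a b : V} (ha : ‖a‖ < c) (hb : ‖b‖ < c) :
    gamma c (eAdd c a b) = gamma c a * gamma c b * (1 + ⟪a, b⟫ / c ^ 2) := by
  have hG : 0 < gamma c a * gamma c b * (1 + ⟪a, b⟫ / c ^ 2) :=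
    mul_pos (mul_pos (gamma_pos hc ha) (gamma_pos hc hb)) (one_add_inner_div_sq_pos hc ha hb)
  rw [gamma, one_sub_sq_norm_eAdd_div_sq hc ha hb, one_div (_ ^ 2), Real.sqrt_inv,
    Real.sqrt_sq hG.le, one_div, inv_inv]

lemma norm_eAdd_lt {c : ℝ} (hc : 0 < c) {a b : V} (ha : ‖a‖ < c) (hb : ‖b‖ < c) :
    ‖eAdd c a b‖ < c := by
  have hpos : 0 < 1 - ‖eAdd c a b‖ ^ 2 / c ^ 2 := by
    rw [one_sub_sq_norm_eAdd_div_sq hc ha hb]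
    have := gamma_pos hc ha
    have := gamma_pos hc hb
    have := one_add_inner_div_sq_pos hc ha hb
    positivity
  rw [sub_pos, div_lt_one (by positivity)] at hpos
  exact lt_of_pow_lt_pow_left₀ 2 hc.le hpos

lemma eAdd_self {c : ℝ} (hc : 0 < c) {a : V} (ha : ‖a‖ < c) :
    eAdd c a a = (2 * gamma c a ^ 2 / (2 * gamma c a ^ 2 - 1)) • a := by
  have hγ := one_le_gamma hc ha
  have hden : 2 * gamma c a ^ 2 - 1 ≠ 0 := by nlinarith
  rw [eAdd, real_inner_self_eq_norm_sq, sq_norm_eq_of_norm_lt hc ha]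
  match_scalars
  field_simp
  ring

lemma inner_eAdd_left_self {c : ℝ} (hc : 0 < c) {a b : V} (ha : ‖a‖ < c) (hb : ‖b‖ < c) :
    ⟪a, eAdd c a b⟫ = c ^ 2 * (1 - 1 / (gamma c a ^ 2 * (1 + ⟪a, b⟫ / c ^ 2))) := by
  have hγ := gamma_pos hc ha
  have hD := sq_add_inner_pos ha hb
  simp only [eAdd, inner_add_right, real_inner_smul_right, real_inner_self_eq_norm_sq,
    sq_norm_eq_of_norm_lt hc ha]
  field_simp
  ring

lemma neg_eAdd_cancel_left {c : ℝ} (hc : 0 < c) {a b : V} (ha : ‖a‖ < c) (hb : ‖b‖ < c) :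
    eAdd c (-a) (eAdd c a b) = b := by
  have hγ := gamma_pos hc ha
  have hD := sq_add_inner_pos ha hb
  rw [eAdd, inner_neg_left, inner_eAdd_left_self hc ha hb, gamma_neg, eAdd]
  match_scalars <;> field_simp <;> ring

lemma sq_lt_two_mul_gamma_sq_mul {c : ℝ} (hc : 0 < c) {a b : V} (ha : ‖a‖ < c)
    (hb : ‖b‖ < c) : c ^ 2 < 2 * gamma c a ^ 2 * (c ^ 2 + ⟪a, b⟫) := by
  have hγ := gamma_pos hc ha
  have hD := sq_add_inner_pos ha hb
  have h := one_add_inner_div_sq_pos hc ha (norm_eAdd_lt hc ha hb)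
  rw [inner_eAdd_left_self hc ha hb] at h
  field_simp at h
  linarith

lemma eAdd_eAdd_self_left {c : ℝ} (hc : 0 < c) {a b : V} (ha : ‖a‖ < c) (hb : ‖b‖ < c) :
    eAdd c a (eAdd c a b) =
      (2 * gamma c a ^ 2 * (1 + ⟪a, b⟫ / c ^ 2) - 1)⁻¹ •
        (b + (2 * gamma c a ^ 2 * (1 + ⟪a, b⟫ / c ^ 2)) • a) := by
  have hγ := gamma_pos hc ha
  have hD := sq_add_inner_pos ha hb
  have hE := sub_pos.2 (sq_lt_two_mul_gamma_sq_mul hc ha hb)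
  rw [eAdd, inner_eAdd_left_self hc ha hb, eAdd]
  match_scalars <;> field_simp <;> ring

lemma eAdd_eAdd_eAdd_swap {c : ℝ} (hc : 0 < c) {u v : V} (hu : ‖u‖ < c) (hv : ‖v‖ < c) :
    eAdd c u (eAdd c v (eAdd c v u)) = eAdd c (eAdd c u v) (eAdd c u v) := by
  have hγu := gamma_pos hc hu
  have hγv := gamma_pos hc hv
  have hD := sq_add_inner_pos hu hv
  have hE := sub_pos.2 (sq_lt_two_mul_gamma_sq_mul hc hv hu)
  rw [real_inner_comm u v] at hE
  have hG : c ^ 2 ≤ gamma c u * gamma c v * (c ^ 2 + ⟪u, v⟫) := by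
    have h := one_le_gamma hc (norm_eAdd_lt hc hu hv)
    rw [gamma_eAdd hc hu hv] at h
    field_simp at h
    linarith
  have hF : 0 < 2 * (gamma c u * gamma c v * (c ^ 2 + ⟪u, v⟫)) ^ 2 - c ^ 4 := by
    have h4 : c ^ 4 ≤ (gamma c u * gamma c v * (c ^ 2 + ⟪u, v⟫)) ^ 2 := calc
      c ^ 4 = (c ^ 2) ^ 2 := by ring
      _ ≤ _ := pow_le_pow_left₀ (by positivity) hG 2
    have : 0 < c ^ 4 := by positivity
    linarith
  rw [eAdd_eAdd_self_left hc hv hu, eAdd_self hc (norm_eAdd_lt hc hu hv), gamma_eAdd hc hu hv,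
    eAdd, inner_smul_right, inner_add_right, real_inner_smul_right, real_inner_self_eq_norm_sq,
    sq_norm_eq_of_norm_lt hc hu, real_inner_comm u v, eAdd]
  match_scalars <;> field_simp <;> ring

theorem einstein_gyrocommutative (c : ℝ) (hc : 0 < c) (u v : V)
    (hu : ‖u‖ < c) (hv : ‖v‖ < c) :
    eAdd c u v = eGyr c u v (eAdd c v u) := by
  have huv := norm_eAdd_lt hc hu hv
  rw [eGyr, eAdd_eAdd_eAdd_swap hc hu hv, neg_eAdd_cancel_left hc huv huv]
end

section
/- Einstein scalar multiplication obeys the scalar distributive law: for all real numbers r₁, r₂ and every v in the c-ball V_c, (r₁ + r₂) ⊙ v = (r₁ ⊙ v) ⊕ (r₂ ⊙ v). -/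
open scoped RealInnerProductSpace

variable {V : Type*} [NormedAddCommGroup V] [InnerProductSpace ℝ V]

/-!
Along a unit vector `u`, Einstein addition sends `(c a) u` and `(c b) u` to
`(c (a + b) / (1 + a b)) u`, the relativistic addition of velocities. Since
`r ⊙ v = c tanh (r artanh (‖v‖ / c)) (v / ‖v‖)`, the distributive law is then exactly the
addition formula `tanh (x + y) = (tanh x + tanh y) / (1 + tanh x tanh y)`.
-/

theorem Real.tanh_add (x y : ℝ) :
    Real.tanh (x + y) = (Real.tanh x + Real.tanh y) / (1 + Real.tanh x * Real.tanh y) := by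
  have hx := (Real.cosh_pos x).ne'
  have hy := (Real.cosh_pos y).ne'
  have hxy : Real.cosh x * Real.cosh y + Real.sinh x * Real.sinh y ≠ 0 := by
    rw [← Real.cosh_add]; exact (Real.cosh_pos _).ne'
  simp only [Real.tanh_eq_sinh_div_cosh, Real.sinh_add, Real.cosh_add]
  field_simp

theorem gamma_smul_of_norm_eq_one {c : ℝ} (hc : c ≠ 0) (a : ℝ) {u : V} (hu : ‖u‖ = 1) :
    gamma c ((c * a) • u) = 1 / Real.sqrt (1 - a ^ 2) := by
  rw [gamma, norm_smul, hu, mul_one, Real.norm_eq_abs, sq_abs]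
  field_simp

theorem eAdd_smul_smul_of_norm_eq_one {c : ℝ} (hc : c ≠ 0) {a b : ℝ} (ha : |a| < 1)
    (hb : |b| < 1) {u : V} (hu : ‖u‖ = 1) :
    eAdd c ((c * a) • u) ((c * b) • u) = (c * ((a + b) / (1 + a * b))) • u := by
  have ha2 : a ^ 2 < 1 := (sq_lt_one_iff_abs_lt_one a).mpr ha
  have hab : 0 < 1 + a * b := by
    have : |a * b| < 1 := by
      rw [abs_mul]; exact mul_lt_one_of_nonneg_of_lt_one_left (abs_nonneg a) ha hb.le
    linarith [neg_abs_le (a * b)]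
  have hinner : ⟪(c * a) • u, (c * b) • u⟫ = c ^ 2 * (a * b) := by
    rw [real_inner_smul_left, real_inner_smul_right, real_inner_self_eq_norm_sq, hu]
    ring
  have hs0 : 0 < Real.sqrt (1 - a ^ 2) := Real.sqrt_pos.mpr (by linarith)
  have hs2 : Real.sqrt (1 - a ^ 2) ^ 2 = 1 - a ^ 2 := Real.sq_sqrt (by linarith)
  rw [eAdd, gamma_smul_of_norm_eq_one hc _ hu, hinner, smul_smul, smul_smul, ← add_smul,
    ← add_smul, smul_smul]
  congr 1
  generalize Real.sqrt (1 - a ^ 2) = s at hs0 hs2 ⊢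
  field_simp
  linear_combination b * hs2

theorem sMul_eq_smul_normalize (c r : ℝ) {v : V} (hv : v ≠ 0) :
    sMul c r v = (c * Real.tanh (r * artanh (‖v‖ / c))) • (‖v‖⁻¹ • v) := by
  rw [sMul, if_neg hv, smul_smul, div_eq_mul_inv]

theorem einstein_scalar_distributive_general (c : ℝ) (hc : 0 < c)
    (r₁ r₂ : ℝ) (v : V) :
    sMul c (r₁ + r₂) v = eAdd c (sMul c r₁ v) (sMul c r₂ v) := by
  rcases eq_or_ne v 0 with rfl | hv
  · simp [sMul, eAdd]
  have hu : ‖‖v‖⁻¹ • v‖ = 1 := by simpa using norm_smul_inv_norm (𝕜 := ℝ) hv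
  simp only [sMul_eq_smul_normalize _ _ hv]
  rw [eAdd_smul_smul_of_norm_eq_one hc.ne' (Real.abs_tanh_lt_one _) (Real.abs_tanh_lt_one _) hu,
    add_mul, Real.tanh_add]

theorem einstein_scalar_distributive (c : ℝ) (hc : 0 < c)
    (r₁ r₂ : ℝ) (v : V) (hv : ‖v‖ < c) :
    sMul c (r₁ + r₂) v = eAdd c (sMul c r₁ v) (sMul c r₂ v) :=
  einstein_scalar_distributive_general c hc r₁ r₂ v
end

section
/- Einstein scalar multiplication obeys the scalar associative law: for all real numbers r₁, r₂ and every v in the c-ball V_c, (r₁·r₂) ⊙ v = r₁ ⊙ (r₂ ⊙ v). -/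
open scoped RealInnerProductSpace

variable {V : Type*} [NormedAddCommGroup V] [InnerProductSpace ℝ V]

/-! Writing `‖v‖ = c |tanh s|`, the scalar `r ⊙ v` is the ordinary multiple
`(tanh (r s) / tanh s) • v`, so `r ⊙ v` has norm `c |tanh (r s)|` and rapidity `r s`.
Composing two such multiples, the factors `tanh (r₂ s)` cancel and the rapidities multiply. -/

lemma artanh_eq_real_artanh {x : ℝ} (hx : x ∈ Set.Icc (-1) 1) : artanh x = Real.artanh x :=
  (Real.artanh_eq_half_log hx).symm

lemma artanh_tanh (x : ℝ) : artanh (Real.tanh x) = x := by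
  rw [artanh_eq_real_artanh (abs_le.mp (Real.abs_tanh_lt_one x).le), Real.artanh_tanh]

-- Also true when `tanh s = 0`, since then `s = 0` and both sides vanish.
lemma tanh_mul_div_tanh_mul_tanh (r s : ℝ) :
    Real.tanh (r * s) / Real.tanh s * Real.tanh s = Real.tanh (r * s) := by
  by_cases hs : Real.tanh s = 0
  · rw [← Real.tanh_zero] at hs
    simp [Real.tanh_injective hs]
  · exact div_mul_cancel₀ _ hs

lemma exists_eq_mul_abs_tanh {c x : ℝ} (hc : 0 < c) (hx₀ : 0 ≤ x) (hx : x < c) :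
    ∃ s, x = c * |Real.tanh s| := by
  have hxc : x / c ∈ Set.Ioo (-1) 1 :=
    ⟨by linarith [div_nonneg hx₀ hc.le], (div_lt_one hc).mpr hx⟩
  refine ⟨Real.artanh (x / c), ?_⟩
  rw [Real.tanh_artanh hxc, abs_of_nonneg (div_nonneg hx₀ hc.le), mul_div_cancel₀ _ hc.ne']

lemma sMul_eq_of_norm_eq {c s : ℝ} {v : V} (hv : ‖v‖ = c * |Real.tanh s|) (r : ℝ) :
    sMul c r v = (Real.tanh (r * s) / Real.tanh s) • v := by
  rcases eq_or_ne v 0 with rfl | hv0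
  · simp [sMul]
  have hc : c ≠ 0 := by
    rintro rfl
    simp_all
  have hcoeff :
      c * Real.tanh (r * artanh (‖v‖ / c)) / ‖v‖ = Real.tanh (r * s) / Real.tanh s := by
    rw [hv, mul_div_cancel_left₀ _ hc]
    rcases abs_choice (Real.tanh s) with hs | hs <;> rw [hs]
    · rw [artanh_tanh, mul_div_mul_left _ _ hc]
    · rw [← Real.tanh_neg, artanh_tanh, mul_div_mul_left _ _ hc, mul_neg, Real.tanh_neg,
        Real.tanh_neg, neg_div_neg_eq]
  simp only [sMul, hv0, if_false, hcoeff]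

lemma norm_sMul_of_norm_eq {c s : ℝ} {v : V} (hv : ‖v‖ = c * |Real.tanh s|) (r : ℝ) :
    ‖sMul c r v‖ = c * |Real.tanh (r * s)| := by
  rw [sMul_eq_of_norm_eq hv, norm_smul, hv, Real.norm_eq_abs, mul_left_comm, ← abs_mul,
    tanh_mul_div_tanh_mul_tanh]

theorem einstein_scalar_associative (c : ℝ) (hc : 0 < c)
    (r₁ r₂ : ℝ) (v : V) (hv : ‖v‖ < c) :
    sMul c (r₁ * r₂) v = sMul c r₁ (sMul c r₂ v) := by
  obtain ⟨s, hs⟩ := exists_eq_mul_abs_tanh hc (norm_nonneg v) hv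
  rw [sMul_eq_of_norm_eq (norm_sMul_of_norm_eq hs r₂), sMul_eq_of_norm_eq hs,
    sMul_eq_of_norm_eq hs, smul_smul, ← mul_div_assoc, tanh_mul_div_tanh_mul_tanh, mul_assoc]
end

section
/- The Einstein gyrodistance d(A,B) = ‖⊖A ⊕ B‖ obeys the gyrotriangle inequality: for all A, B, P in the c-ball V_c, ‖⊖A ⊕ B‖ ≤ (‖⊖A ⊕ P‖ + ‖⊖P ⊕ B‖)/(1 + ‖⊖A ⊕ P‖·‖⊖P ⊕ B‖/c²), where the right-hand side is the Einstein addition of the two nonnegative real numbers ‖⊖A ⊕ P‖ and ‖⊖P ⊕ B‖. -/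
/-!
Lift `u ∈ V_c` to the timelike event `(c, u)` of Minkowski space `ℝ × V`, with Lorentz form
`m u v = minkowskiInner c u v = c² - ⟪u, v⟫`. Then `c² - ‖⊖u ⊕ v‖² = c² m u u * m v v / (m u v)²`: the
Lorentz factor of `⊖u ⊕ v` is the hyperbolic cosine of the angle between the two events, and Einstein
addition of reals adds these angles. The gyrotriangle inequality is therefore the reverse triangle
inequality `cosh θ_AB ≤ cosh θ_AP cosh θ_PB + sinh θ_AP sinh θ_PB`, which is Cauchy–Schwarz for the
Lorentz form on the orthogonal complement of `(c, P)`, where that form is negative definite.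
-/

open scoped RealInnerProductSpace

variable {V : Type*} [NormedAddCommGroup V] [InnerProductSpace ℝ V]

theorem sq_sub_sq_add_div_one_add_mul_div {c x y : ℝ} (hc : c ≠ 0) (hxy : c ^ 2 + x * y ≠ 0) :
    c ^ 2 - ((x + y) / (1 + x * y / c ^ 2)) ^ 2 =
      c ^ 2 * (c ^ 2 - x ^ 2) * (c ^ 2 - y ^ 2) / (c ^ 2 + x * y) ^ 2 := by
  field_simp
  ring

def minkowskiInner (c : ℝ) (u v : V) : ℝ := c ^ 2 - ⟪u, v⟫

theorem minkowskiInner_comm (c : ℝ) (u v : V) : minkowskiInner c u v = minkowskiInner c v u := by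
  rw [minkowskiInner, minkowskiInner, real_inner_comm]

section
variable {c : ℝ} {u v : V}

theorem abs_inner_lt_sq (hu : ‖u‖ < c) (hv : ‖v‖ < c) : |⟪u, v⟫| < c ^ 2 :=
  (abs_real_inner_le_norm u v).trans_lt <| by
    rw [sq]; exact mul_lt_mul'' hu hv (norm_nonneg u) (norm_nonneg v)

theorem sq_sub_norm_sq_eAdd (hu : ‖u‖ < c) (huv : c ^ 2 + ⟪u, v⟫ ≠ 0) :
    c ^ 2 - ‖eAdd c u v‖ ^ 2 =
      c ^ 2 * (c ^ 2 - ‖u‖ ^ 2) * (c ^ 2 - ‖v‖ ^ 2) / (c ^ 2 + ⟪u, v⟫) ^ 2 := by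
  have hc : 0 < c := (norm_nonneg u).trans_lt hu
  set s := Real.sqrt (1 - ‖u‖ ^ 2 / c ^ 2)
  have hs_sq : s ^ 2 = 1 - ‖u‖ ^ 2 / c ^ 2 := by
    refine Real.sq_sqrt (sub_nonneg.2 (div_le_one_of_le₀ ?_ (sq_nonneg c)))
    exact pow_le_pow_left₀ (norm_nonneg u) hu.le 2
  have hs : 0 < s := by
    refine Real.sqrt_pos.2 (sub_pos.2 ((div_lt_one (by positivity)).2 ?_))
    exact pow_lt_pow_left₀ hu (norm_nonneg u) two_ne_zero
  have hu_sq : ‖u‖ ^ 2 = c ^ 2 * (1 - s ^ 2) := by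
    rw [hs_sq]; field_simp; ring
  have heAdd : eAdd c u v =
      (c ^ 2 / (c ^ 2 + ⟪u, v⟫)) • ((1 + ⟪u, v⟫ / (c ^ 2 * (1 + s))) • u + s • v) := by
    have hg : gamma c u = 1 / s := rfl
    rw [eAdd, hg]
    match_scalars <;> field_simp; ring
  rw [heAdd, norm_smul, mul_pow, norm_add_sq_real, norm_smul, norm_smul, real_inner_smul_left,
    real_inner_smul_right]
  simp only [mul_pow, Real.norm_eq_abs, sq_abs, hu_sq]
  field_simp
  ring

theorem minkowskiInner_pos (hu : ‖u‖ < c) (hv : ‖v‖ < c) : 0 < minkowskiInner c u v :=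
  sub_pos.2 ((le_abs_self _).trans_lt (abs_inner_lt_sq hu hv))

theorem sq_sub_norm_sq_eAdd_neg (hu : ‖u‖ < c) (hv : ‖v‖ < c) :
    c ^ 2 - ‖eAdd c (-u) v‖ ^ 2 =
      c ^ 2 * minkowskiInner c u u * minkowskiInner c v v / minkowskiInner c u v ^ 2 := by
  have huv : c ^ 2 + ⟪-u, v⟫ ≠ 0 := by
    rw [inner_neg_left, ← sub_eq_add_neg]; exact (minkowskiInner_pos hu hv).ne'
  rw [sq_sub_norm_sq_eAdd (by rwa [norm_neg]) huv]
  simp only [minkowskiInner, norm_neg, inner_neg_left, real_inner_self_eq_norm_sq, sub_eq_add_neg]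

theorem sq_mul_norm_eAdd_neg (hu : ‖u‖ < c) (hv : ‖v‖ < c) :
    (minkowskiInner c u v * ‖eAdd c (-u) v‖) ^ 2 =
      c ^ 2 * (minkowskiInner c u v ^ 2 - minkowskiInner c u u * minkowskiInner c v v) := by
  have h := sq_sub_norm_sq_eAdd_neg hu hv
  have huv := (minkowskiInner_pos hu hv).ne'
  field_simp at h
  linear_combination -h

end

/-- `r² ⟪X, Y⟫ - ⟪X, P⟫ ⟪Y, P⟫` is `-r²` times the Lorentz form of the events `(⟪X, P⟫ / r, X)` and
`(⟪Y, P⟫ / r, Y)`, which are orthogonal to `(r, P)`. -/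
theorem sq_inner_sub_inner_mul_inner_le {r : ℝ} {P : V} (hP : ‖P‖ ≤ r) (X Y : V) :
    (r ^ 2 * ⟪X, Y⟫ - ⟪X, P⟫ * ⟪Y, P⟫) ^ 2 ≤
      (r ^ 2 * ‖X‖ ^ 2 - ⟪X, P⟫ ^ 2) * (r ^ 2 * ‖Y‖ ^ 2 - ⟪Y, P⟫ ^ 2) := by
  have hQ (Z : V) : 0 ≤ r ^ 2 * ‖Z‖ ^ 2 - ⟪Z, P⟫ ^ 2 := by
    have hZP : |⟪Z, P⟫| ≤ ‖Z‖ * r :=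
      (abs_real_inner_le_norm Z P).trans (mul_le_mul_of_nonneg_left hP (norm_nonneg Z))
    nlinarith [sq_le_sq' (abs_le.1 hZP).1 (abs_le.1 hZP).2]
  have hdisc := discrim_le_zero (a := r ^ 2 * ‖Y‖ ^ 2 - ⟪Y, P⟫ ^ 2)
    (b := 2 * (r ^ 2 * ⟪X, Y⟫ - ⟪X, P⟫ * ⟪Y, P⟫)) (c := r ^ 2 * ‖X‖ ^ 2 - ⟪X, P⟫ ^ 2)
    fun t ↦ by
      have := hQ (X + t • Y)
      simp only [norm_add_sq_real, inner_add_left, norm_smul, real_inner_smul_left,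
        real_inner_smul_right, mul_pow, Real.norm_eq_abs, sq_abs] at this
      linear_combination this
  rw [discrim] at hdisc
  linarith

theorem minkowskiInner_gram_le {c : ℝ} {P : V} (hP : ‖P‖ < c) (A B : V) :
    (minkowskiInner c P P * minkowskiInner c A B - minkowskiInner c A P * minkowskiInner c P B) ^ 2 ≤
      (minkowskiInner c A P ^ 2 - minkowskiInner c A A * minkowskiInner c P P) *
        (minkowskiInner c P B ^ 2 - minkowskiInner c P P * minkowskiInner c B B) := by
  set p := minkowskiInner c P P
  -- up to the factor `p`, the spatial part of the projection of `(c, A)` orthogonally to `(c, P)`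
  let proj (A : V) : V := p • A - minkowskiInner c A P • P
  have key (A B : V) : c ^ 2 * ⟪proj A, proj B⟫ - ⟪proj A, P⟫ * ⟪proj B, P⟫ =
      c ^ 2 * p * (minkowskiInner c A P * minkowskiInner c B P - p * minkowskiInner c A B) := by
    simp only [proj, p, minkowskiInner, inner_sub_left, inner_sub_right, real_inner_smul_left,
      real_inner_smul_right, real_inner_self_eq_norm_sq, real_inner_comm P A, real_inner_comm P B]
    ring
  have h := sq_inner_sub_inner_mul_inner_le hP.le (proj A) (proj B)
  rw [← real_inner_self_eq_norm_sq, ← real_inner_self_eq_norm_sq, sq ⟪proj A, P⟫,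
    sq ⟪proj B, P⟫, key, key, key, minkowskiInner_comm c B P] at h
  have hp : 0 < c ^ 2 * p := mul_pos (by nlinarith [norm_nonneg P]) (minkowskiInner_pos hP hP)
  refine le_of_mul_le_mul_left ?_ (pow_pos hp 2)
  linear_combination h

theorem sq_mul_minkowskiInner_le {c : ℝ} {A B P : V} (hA : ‖A‖ < c) (hB : ‖B‖ < c) (hP : ‖P‖ < c) :
    c ^ 2 * minkowskiInner c P P * minkowskiInner c A B ≤
      minkowskiInner c A P * minkowskiInner c P B * (c ^ 2 + ‖eAdd c (-A) P‖ * ‖eAdd c (-P) B‖) := by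
  have hx := sq_mul_norm_eAdd_neg hA hP
  have hy := sq_mul_norm_eAdd_neg hP hB
  have hG := minkowskiInner_gram_le hP A B
  have hα := (minkowskiInner_pos hA hP).le
  have hβ := (minkowskiInner_pos hP hB).le
  have h : |c ^ 2 * (minkowskiInner c P P * minkowskiInner c A B -
      minkowskiInner c A P * minkowskiInner c P B)| ≤
      minkowskiInner c A P * ‖eAdd c (-A) P‖ * (minkowskiInner c P B * ‖eAdd c (-P) B‖) := by
    refine abs_le_of_sq_le_sq ?_ (by positivity)
    rw [mul_pow (_ * _), hx, hy]
    linear_combination c ^ 4 * hG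
  linarith [le_of_abs_le h]

theorem einstein_gyrotriangle_inequality (c : ℝ) (hc : 0 < c) (A B P : V)
    (hA : ‖A‖ < c) (hB : ‖B‖ < c) (hP : ‖P‖ < c) :
    ‖eAdd c (-A) B‖ ≤
      (‖eAdd c (-A) P‖ + ‖eAdd c (-P) B‖) /
        (1 + ‖eAdd c (-A) P‖ * ‖eAdd c (-P) B‖ / c ^ 2) := by
  have hK := sq_mul_minkowskiInner_le hA hB hP
  set x := ‖eAdd c (-A) P‖
  set y := ‖eAdd c (-P) B‖
  have hxy : 0 < c ^ 2 + x * y := by positivity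
  rw [← pow_le_pow_iff_left₀ (norm_nonneg _) (by positivity) two_ne_zero,
    ← sub_le_sub_iff_left (c ^ 2), sq_sub_sq_add_div_one_add_mul_div hc.ne' hxy.ne',
    sq_sub_norm_sq_eAdd_neg hA hP, sq_sub_norm_sq_eAdd_neg hP hB, sq_sub_norm_sq_eAdd_neg hA hB]
  have ha := minkowskiInner_pos hA hA
  have hb := minkowskiInner_pos hB hB
  have hp := minkowskiInner_pos hP hP
  have hα := minkowskiInner_pos hA hP
  have hβ := minkowskiInner_pos hP hB
  have hδ := minkowskiInner_pos hA hB
  calc _ = c ^ 2 * minkowskiInner c A A * minkowskiInner c B B * (c ^ 2 * minkowskiInner c P P) ^ 2 /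
        (minkowskiInner c A P * minkowskiInner c P B * (c ^ 2 + x * y)) ^ 2 := by
        field_simp
    _ ≤ c ^ 2 * minkowskiInner c A A * minkowskiInner c B B * (c ^ 2 * minkowskiInner c P P) ^ 2 /
        (c ^ 2 * minkowskiInner c P P * minkowskiInner c A B) ^ 2 := by
        gcongr
    _ = _ := by
        field_simp
end

section
/- (Möbius double-gyroline theorem) Let A, B be any two distinct points of the s-ball V_s and let L(t) = A ⊕_M ((⊖_M A ⊕_M B) ⊙ t), t ∈ ℝ, be the Möbius gyroline through A and B. Then for all t ∈ ℝ, 2 ⊙ L(t) = A ⊞_M L(2t). -/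
open scoped RealInnerProductSpace

variable {V : Type*} [NormedAddCommGroup V] [InnerProductSpace ℝ V]

/-!
Dilating by `s` reduces everything to the unit ball, where `2 ⊙ x = x ⊕ x` and
`(2t) ⊙ d = t ⊙ d ⊕ t ⊙ d`. With `w = t ⊙ (⊖A ⊕ B)` the claim becomes
`(A ⊕ w) ⊕ (A ⊕ w) = A ⊞ (A ⊕ (w ⊕ w))`. Möbius coaddition has the closed form
`u ⊞ v = ((1 - ‖v‖²) u + (1 - ‖u‖²) v) / (1 - ‖u‖² ‖v‖²)`, and with it both sides reduce to
`2 ((1 + 2⟪A, w⟫ + ‖w‖²) A + (1 - ‖A‖²) w) / ((1 + ‖A‖²)(1 + ‖w‖²) + 4⟪A, w⟫)`.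
-/

lemma Real.tanh_two_mul (x : ℝ) :
    Real.tanh (2 * x) = 2 * Real.tanh x / (1 + Real.tanh x ^ 2) := by
  have := (Real.cosh_pos x).ne'
  rw [Real.tanh_eq_sinh_div_cosh, Real.tanh_eq_sinh_div_cosh, Real.sinh_two_mul,
    Real.cosh_two_mul]
  field_simp

lemma mAdd_zero (s : ℝ) (u : V) : mAdd s u 0 = u := by
  simp [mAdd]

lemma mAdd_neg_cancel (s : ℝ) (v : V) : mAdd s (-v) v = 0 := by
  rw [mAdd, inner_neg_left, real_inner_self_eq_norm_sq, norm_neg]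
  match_scalars
  ring

lemma mGyr_neg_self (s : ℝ) (u v : V) : mGyr s u (-v) v = mAdd s (-mAdd s u (-v)) u := by
  rw [mGyr, mAdd_neg_cancel, mAdd_zero]

lemma mAdd_smul {s : ℝ} (hs : s ≠ 0) (u v : V) : mAdd s (s • u) (s • v) = s • mAdd 1 u v := by
  simp only [mAdd, real_inner_smul_left, real_inner_smul_right, norm_smul, Real.norm_eq_abs,
    mul_pow, sq_abs, smul_smul]
  match_scalars <;> field_simp

lemma mCoadd_smul {s : ℝ} (hs : s ≠ 0) (u v : V) :
    mCoadd s (s • u) (s • v) = s • mCoadd 1 u v := by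
  simp only [mCoadd, mGyr, ← smul_neg, mAdd_smul hs]

lemma sMul_smul {s : ℝ} (hs : 0 < s) (r : ℝ) (v : V) : sMul s r (s • v) = s • sMul 1 r v := by
  rcases eq_or_ne v 0 with rfl | hv
  · simp [sMul]
  · rw [sMul, if_neg (smul_ne_zero hs.ne' hv), sMul, if_neg hv, norm_smul, Real.norm_eq_abs,
      abs_of_pos hs, mul_div_cancel_left₀ _ hs.ne', div_one, smul_smul, smul_smul]
    congr 1
    field_simp

section UnitBall

variable {u v w : V}

lemma mAdd_one_eq (u v : V) : mAdd 1 u v = (1 + 2 * ⟪u, v⟫ + ‖u‖ ^ 2 * ‖v‖ ^ 2)⁻¹ •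
    ((1 + 2 * ⟪u, v⟫ + ‖v‖ ^ 2) • u + (1 - ‖u‖ ^ 2) • v) := by
  simp [mAdd]

lemma mAdd_one_self (v : V) : mAdd 1 v v = (2 / (1 + ‖v‖ ^ 2)) • v := by
  rw [mAdd_one_eq, real_inner_self_eq_norm_sq]
  have : (1 : ℝ) + ‖v‖ ^ 2 ≠ 0 := by positivity
  match_scalars
  field_simp
  ring

lemma one_add_two_inner_add_sq_mul_sq_pos (hu : ‖u‖ < 1) (hv : ‖v‖ < 1) :
    0 < 1 + 2 * ⟪u, v⟫ + ‖u‖ ^ 2 * ‖v‖ ^ 2 := by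
  have hcs : -(‖u‖ * ‖v‖) ≤ ⟪u, v⟫ := neg_le_of_abs_le (abs_real_inner_le_norm u v)
  have huv : ‖u‖ * ‖v‖ < 1 := by nlinarith [norm_nonneg u, norm_nonneg v]
  nlinarith [sq_nonneg (1 - ‖u‖ * ‖v‖)]

lemma one_sub_two_inner_add_sq_mul_sq_pos (hu : ‖u‖ < 1) (hv : ‖v‖ < 1) :
    0 < 1 - 2 * ⟪u, v⟫ + ‖u‖ ^ 2 * ‖v‖ ^ 2 := by
  simpa [inner_neg_right, ← sub_eq_add_neg] using
    one_add_two_inner_add_sq_mul_sq_pos hu (v := -v) (by rwa [norm_neg])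

lemma one_add_sq_mul_one_add_sq_add_four_inner_pos (hu : ‖u‖ < 1) (hw : ‖w‖ < 1) :
    0 < (1 + ‖u‖ ^ 2) * (1 + ‖w‖ ^ 2) + 4 * ⟪u, w⟫ := by
  have hcs : -(‖u‖ * ‖w‖) ≤ ⟪u, w⟫ := neg_le_of_abs_le (abs_real_inner_le_norm u w)
  have huw : ‖u‖ * ‖w‖ < 1 := by nlinarith [norm_nonneg u, norm_nonneg w]
  nlinarith [sq_nonneg (‖u‖ - ‖w‖), sq_nonneg (1 - ‖u‖ * ‖w‖)]

lemma one_sub_norm_sq_mAdd_one (hu : ‖u‖ < 1) (hv : ‖v‖ < 1) :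
    1 - ‖mAdd 1 u v‖ ^ 2 =
      (1 - ‖u‖ ^ 2) * (1 - ‖v‖ ^ 2) / (1 + 2 * ⟪u, v⟫ + ‖u‖ ^ 2 * ‖v‖ ^ 2) := by
  have hD := (one_add_two_inner_add_sq_mul_sq_pos hu hv).ne'
  rw [mAdd_one_eq, norm_smul, mul_pow, norm_add_sq_real]
  simp only [norm_smul, real_inner_smul_left, real_inner_smul_right, mul_pow, Real.norm_eq_abs,
    sq_abs, abs_inv, inv_pow]
  field_simp
  ring

lemma norm_mAdd_one_lt_one (hu : ‖u‖ < 1) (hv : ‖v‖ < 1) : ‖mAdd 1 u v‖ < 1 := by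
  have hD := one_add_two_inner_add_sq_mul_sq_pos hu hv
  have hu' : 0 < 1 - ‖u‖ ^ 2 := by nlinarith [norm_nonneg u]
  have hv' : 0 < 1 - ‖v‖ ^ 2 := by nlinarith [norm_nonneg v]
  have : 0 < 1 - ‖mAdd 1 u v‖ ^ 2 := one_sub_norm_sq_mAdd_one hu hv ▸ by positivity
  nlinarith [norm_nonneg (mAdd 1 u v)]

lemma mGyr_one_neg_self_eq (hu : ‖u‖ < 1) (hv : ‖v‖ < 1) :
    mGyr 1 u (-v) v = (1 - 2 * ⟪u, v⟫ + ‖u‖ ^ 2 * ‖v‖ ^ 2)⁻¹ •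
      ((-(2 * ‖v‖ ^ 2 * (1 - ⟪u, v⟫))) • u + (1 - ‖u‖ ^ 2 * ‖v‖ ^ 2) • v) := by
  have hD := one_sub_two_inner_add_sq_mul_sq_pos hu hv
  have hu' : 1 - ‖u‖ ^ 2 ≠ 0 := by nlinarith [norm_nonneg u]
  have hz : mAdd 1 u (-v) = (1 - 2 * ⟪u, v⟫ + ‖u‖ ^ 2 * ‖v‖ ^ 2)⁻¹ •
      ((1 - 2 * ⟪u, v⟫ + ‖v‖ ^ 2) • u - (1 - ‖u‖ ^ 2) • v) := by
    rw [mAdd_one_eq, inner_neg_right, norm_neg, smul_neg, ← sub_eq_add_neg, mul_neg,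
      ← sub_eq_add_neg]
  have hzu : ⟪mAdd 1 u (-v), u⟫ = (‖u‖ ^ 2 - ⟪u, v⟫ + ‖u‖ ^ 2 * ‖v‖ ^ 2 - ‖u‖ ^ 2 * ⟪u, v⟫) /
      (1 - 2 * ⟪u, v⟫ + ‖u‖ ^ 2 * ‖v‖ ^ 2) := by
    rw [hz, real_inner_smul_left, inner_sub_left, real_inner_smul_left, real_inner_smul_left,
      real_inner_self_eq_norm_sq, real_inner_comm]
    field_simp
    ring
  have hzz : ‖mAdd 1 u (-v)‖ ^ 2 =
      (‖u‖ ^ 2 + ‖v‖ ^ 2 - 2 * ⟪u, v⟫) / (1 - 2 * ⟪u, v⟫ + ‖u‖ ^ 2 * ‖v‖ ^ 2) := by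
    have h := one_sub_norm_sq_mAdd_one hu (v := -v) (by rwa [norm_neg])
    rw [inner_neg_right, norm_neg, mul_neg, ← sub_eq_add_neg, eq_div_iff hD.ne'] at h
    rw [eq_div_iff hD.ne']
    linear_combination -h
  have hden : 1 + 2 * ⟪-mAdd 1 u (-v), u⟫ + ‖-mAdd 1 u (-v)‖ ^ 2 * ‖u‖ ^ 2 =
      (1 - ‖u‖ ^ 2) ^ 2 / (1 - 2 * ⟪u, v⟫ + ‖u‖ ^ 2 * ‖v‖ ^ 2) := by
    rw [inner_neg_left, norm_neg, hzu, hzz]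
    field_simp
    ring
  rw [mGyr_neg_self, mAdd_one_eq, hden, inner_neg_left, norm_neg, hzu, hzz, hz]
  match_scalars <;> (field_simp; ring)

lemma norm_sq_mGyr_one_neg_self (hu : ‖u‖ < 1) (hv : ‖v‖ < 1) :
    ‖mGyr 1 u (-v) v‖ ^ 2 = ‖v‖ ^ 2 := by
  have hD := one_sub_two_inner_add_sq_mul_sq_pos hu hv
  rw [mGyr_one_neg_self_eq hu hv, norm_smul, mul_pow, norm_add_sq_real]
  simp only [norm_smul, real_inner_smul_left, real_inner_smul_right, mul_pow, Real.norm_eq_abs,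
    sq_abs, abs_inv, inv_pow]
  field_simp
  ring

lemma mCoadd_one_eq (hu : ‖u‖ < 1) (hv : ‖v‖ < 1) :
    mCoadd 1 u v = (1 - ‖u‖ ^ 2 * ‖v‖ ^ 2)⁻¹ • ((1 - ‖v‖ ^ 2) • u + (1 - ‖u‖ ^ 2) • v) := by
  have hD := one_sub_two_inner_add_sq_mul_sq_pos hu hv
  have huv : 1 - ‖u‖ ^ 2 * ‖v‖ ^ 2 ≠ 0 := by
    have hu2 : ‖u‖ ^ 2 < 1 := by nlinarith [norm_nonneg u]
    have hv2 : ‖v‖ ^ 2 < 1 := by nlinarith [norm_nonneg v]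
    exact (sub_pos.2 (mul_lt_one_of_nonneg_of_lt_one_left (sq_nonneg _) hu2 hv2.le)).ne'
  have hug : ⟪u, mGyr 1 u (-v) v⟫ =
      (⟪u, v⟫ + ‖u‖ ^ 2 * ‖v‖ ^ 2 * ⟪u, v⟫ - 2 * ‖u‖ ^ 2 * ‖v‖ ^ 2) /
        (1 - 2 * ⟪u, v⟫ + ‖u‖ ^ 2 * ‖v‖ ^ 2) := by
    rw [mGyr_one_neg_self_eq hu hv]
    simp only [real_inner_smul_right, inner_add_right, real_inner_self_eq_norm_sq]
    field_simp
    ring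
  have hden : 1 + 2 * ⟪u, mGyr 1 u (-v) v⟫ + ‖u‖ ^ 2 * ‖mGyr 1 u (-v) v‖ ^ 2 =
      (1 - ‖u‖ ^ 2 * ‖v‖ ^ 2) ^ 2 / (1 - 2 * ⟪u, v⟫ + ‖u‖ ^ 2 * ‖v‖ ^ 2) := by
    rw [hug, norm_sq_mGyr_one_neg_self hu hv]
    field_simp
    ring
  rw [mCoadd, mAdd_one_eq, hden, hug, norm_sq_mGyr_one_neg_self hu hv,
    mGyr_one_neg_self_eq hu hv]
  match_scalars
  · field_simp
    ring
  · field_simp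

lemma norm_sMul_one_lt_one (r : ℝ) (v : V) : ‖sMul 1 r v‖ < 1 := by
  rcases eq_or_ne v 0 with rfl | hv
  · simp [sMul]
  · rw [sMul, if_neg hv, norm_smul, Real.norm_eq_abs, one_mul, abs_div, abs_norm,
      div_mul_cancel₀ _ (norm_ne_zero_iff.mpr hv)]
    exact Real.abs_tanh_lt_one _

lemma sMul_one_one (hv : ‖v‖ < 1) : sMul 1 1 v = v := by
  rcases eq_or_ne v 0 with rfl | hv0
  · simp [sMul]
  · have hv1 : -1 < ‖v‖ := by linarith [norm_nonneg v]
    rw [sMul, if_neg hv0, div_one, one_mul, one_mul, artanh_eq_real_artanh ⟨hv1.le, hv.le⟩,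
      Real.tanh_artanh ⟨hv1, hv⟩, div_self (norm_ne_zero_iff.mpr hv0), one_smul]

lemma sMul_one_two_mul (r : ℝ) (v : V) :
    sMul 1 (2 * r) v = mAdd 1 (sMul 1 r v) (sMul 1 r v) := by
  rcases eq_or_ne v 0 with rfl | hv
  · simp [sMul, mAdd_zero]
  · have hnorm : ‖sMul 1 r v‖ = |Real.tanh (r * artanh ‖v‖)| := by
      rw [sMul, if_neg hv, norm_smul, Real.norm_eq_abs, one_mul, div_one, abs_div, abs_norm,
        div_mul_cancel₀ _ (norm_ne_zero_iff.mpr hv)]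
    rw [mAdd_one_self, hnorm, sq_abs, sMul, if_neg hv, sMul, if_neg hv, smul_smul, mul_assoc,
      Real.tanh_two_mul]
    simp only [div_one, one_mul]
    congr 1
    have : 1 + Real.tanh (r * artanh ‖v‖) ^ 2 ≠ 0 := by positivity
    field_simp

lemma sMul_one_two (hv : ‖v‖ < 1) : sMul 1 2 v = mAdd 1 v v := by
  simpa [sMul_one_one hv] using sMul_one_two_mul 1 v

lemma mAdd_one_self_mAdd_one_eq (hu : ‖u‖ < 1) (hw : ‖w‖ < 1) :
    mAdd 1 (mAdd 1 u w) (mAdd 1 u w) = (2 / ((1 + ‖u‖ ^ 2) * (1 + ‖w‖ ^ 2) + 4 * ⟪u, w⟫)) •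
      ((1 + 2 * ⟪u, w⟫ + ‖w‖ ^ 2) • u + (1 - ‖u‖ ^ 2) • w) := by
  have hD := (one_add_two_inner_add_sq_mul_sq_pos hu hw).ne'
  have hF := (one_add_sq_mul_one_add_sq_add_four_inner_pos hu hw).ne'
  have hx : 1 + ‖mAdd 1 u w‖ ^ 2 = ((1 + ‖u‖ ^ 2) * (1 + ‖w‖ ^ 2) + 4 * ⟪u, w⟫) /
      (1 + 2 * ⟪u, w⟫ + ‖u‖ ^ 2 * ‖w‖ ^ 2) := by
    have h := one_sub_norm_sq_mAdd_one hu hw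
    rw [eq_div_iff hD] at h ⊢
    linear_combination -h
  rw [mAdd_one_self, hx, mAdd_one_eq u w, smul_smul]
  congr 1
  field_simp

lemma mCoadd_one_mAdd_one_self_eq (hu : ‖u‖ < 1) (hw : ‖w‖ < 1) :
    mCoadd 1 u (mAdd 1 u (mAdd 1 w w)) =
      (2 / ((1 + ‖u‖ ^ 2) * (1 + ‖w‖ ^ 2) + 4 * ⟪u, w⟫)) •
        ((1 + 2 * ⟪u, w⟫ + ‖w‖ ^ 2) • u + (1 - ‖u‖ ^ 2) • w) := by
  have hww := norm_mAdd_one_lt_one hw hw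
  have hb : 0 < 1 + ‖w‖ ^ 2 := by positivity
  have hu' : 1 - ‖u‖ ^ 2 ≠ 0 := by nlinarith [norm_nonneg u]
  have hF := (one_add_sq_mul_one_add_sq_add_four_inner_pos hu hw).ne'
  have hinner : ⟪u, mAdd 1 w w⟫ = 2 / (1 + ‖w‖ ^ 2) * ⟪u, w⟫ := by
    rw [mAdd_one_self, real_inner_smul_right]
  have hnorm : ‖mAdd 1 w w‖ ^ 2 = (2 / (1 + ‖w‖ ^ 2)) ^ 2 * ‖w‖ ^ 2 := by
    rw [mAdd_one_self, norm_smul, mul_pow, Real.norm_eq_abs, sq_abs]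
  set E := (1 + ‖w‖ ^ 2) ^ 2 + 4 * ⟪u, w⟫ * (1 + ‖w‖ ^ 2) + 4 * ‖u‖ ^ 2 * ‖w‖ ^ 2
  have hDE : 1 + 2 * ⟪u, mAdd 1 w w⟫ + ‖u‖ ^ 2 * ‖mAdd 1 w w‖ ^ 2 = E / (1 + ‖w‖ ^ 2) ^ 2 := by
    rw [hinner, hnorm]
    field_simp
    ring
  have hE : 0 < E := by
    have h := one_add_two_inner_add_sq_mul_sq_pos hu hww
    rw [hDE] at h
    exact (div_pos_iff_of_pos_right (by positivity)).1 h
  have hyy : ‖mAdd 1 u (mAdd 1 w w)‖ ^ 2 = 1 - (1 - ‖u‖ ^ 2) * (1 - ‖w‖ ^ 2) ^ 2 / E := by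
    have h := one_sub_norm_sq_mAdd_one hu hww
    rw [hDE, hnorm] at h
    rw [eq_sub_iff_add_eq, ← eq_sub_iff_add_eq', h]
    field_simp
    ring
  have hcoef : 1 - ‖u‖ ^ 2 * ‖mAdd 1 u (mAdd 1 w w)‖ ^ 2 =
      (1 - ‖u‖ ^ 2) * (1 + ‖w‖ ^ 2) * ((1 + ‖u‖ ^ 2) * (1 + ‖w‖ ^ 2) + 4 * ⟪u, w⟫) / E := by
    rw [hyy]
    field_simp
    ring
  rw [mCoadd_one_eq hu (norm_mAdd_one_lt_one hu hww), hcoef, hyy, mAdd_one_eq u, hDE, hinner,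
    hnorm, mAdd_one_self]
  match_scalars
  · field_simp
    ring
  · field_simp

theorem mAdd_self_mAdd_one_eq_mCoadd (hu : ‖u‖ < 1) (hw : ‖w‖ < 1) :
    mAdd 1 (mAdd 1 u w) (mAdd 1 u w) = mCoadd 1 u (mAdd 1 u (mAdd 1 w w)) := by
  rw [mAdd_one_self_mAdd_one_eq hu hw, mCoadd_one_mAdd_one_self_eq hu hw]

end UnitBall

theorem mobius_double_gyroline_general (s : ℝ) (A B : V)
    (hA : ‖A‖ < s) :
    ∀ t : ℝ,
      sMul s 2 (mAdd s A (sMul s t (mAdd s (-A) B))) =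
        mCoadd s A (mAdd s A (sMul s (2 * t) (mAdd s (-A) B))) := by
  intro t
  have hs : 0 < s := (norm_nonneg A).trans_lt hA
  obtain ⟨a, rfl⟩ : ∃ a : V, A = s • a := ⟨s⁻¹ • A, (smul_inv_smul₀ hs.ne' A).symm⟩
  obtain ⟨b, rfl⟩ : ∃ b : V, B = s • b := ⟨s⁻¹ • B, (smul_inv_smul₀ hs.ne' B).symm⟩
  have ha : ‖a‖ < 1 := by
    rwa [norm_smul, Real.norm_eq_abs, abs_of_pos hs, mul_lt_iff_lt_one_right hs] at hA
  simp only [← smul_neg, mAdd_smul hs.ne', sMul_smul hs, mCoadd_smul hs.ne']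
  congr 1
  have hw := norm_sMul_one_lt_one t (mAdd 1 (-a) b)
  rw [sMul_one_two (norm_mAdd_one_lt_one ha hw), sMul_one_two_mul,
    mAdd_self_mAdd_one_eq_mCoadd ha hw]

theorem mobius_double_gyroline (s : ℝ) (hs : 0 < s) (A B : V)
    (hA : ‖A‖ < s) (hB : ‖B‖ < s) (hAB : A ≠ B) :
    ∀ t : ℝ,
      sMul s 2 (mAdd s A (sMul s t (mAdd s (-A) B))) =
        mCoadd s A (mAdd s A (sMul s (2 * t) (mAdd s (-A) B))) :=
  mobius_double_gyroline_general s A B hA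
end
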